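/- Iterated truthful announcement need not stabilize other formulas on S5: there exist a pointed two-agent Kripke model (M,s) in which both accessibility relations are equivalence relations (S5) and announcement-free formulas φ and ψ such that, writing M|_{φ^0} = M and M|_{φ^{n+1}} = (M|_{φ^n})|_φ for the iterated state-elimination update by φ, for every n ≥ 0: the state s survives (s is a state of M|_{φ^n}) and M|_{φ^n}, s ⊨ φ (so every iterated announcement of φ is truthful at s), while M|_{φ^n}, s ⊨ ψ if and only if n is odd; that is, the truth value of ψ at s never stabilizes under iterated truthful announcement of φ. -/

import Mathlib

inductive Form (A : Type) : Type
  | atom : ℕ → Form A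
  | neg  : Form A → Form A
  | conj : Form A → Form A → Form A
  | box  : A → Form A → Form A
  | ann  : Form A → Form A → Form A
  deriving DecidableEq

namespace Form

/-- ◇_a φ := ¬□_a¬φ -/
def dia {A : Type} (a : A) (φ : Form A) : Form A := .neg (.box a (.neg φ))

/-- φ → ψ := ¬(φ ∧ ¬ψ) -/
def imp {A : Type} (φ ψ : Form A) : Form A := .neg (.conj φ (.neg ψ))

/-- φ ∨ ψ := ¬(¬φ ∧ ¬ψ) -/
def or {A : Type} (φ ψ : Form A) : Form A := .neg (.conj (.neg φ) (.neg ψ))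

/-- ⊥ := p ∧ ¬p -/
def bot {A : Type} : Form A := .conj (.atom 0) (.neg (.atom 0))

def top {A : Type} : Form A := .neg bot

def iff {A : Type} (φ ψ : Form A) : Form A := .conj (imp φ ψ) (imp ψ φ)

end Form

/-- A Kripke model over agents `A` with state set `S`. -/
structure Model (A S : Type) where
  R : A → S → S → Prop
  V : ℕ → S → Prop

/-- Arrow elimination: keep only arrows pointing to states satisfying `P`. -/
def Model.restrict {A S : Type} (M : Model A S) (P : S → Prop) : Model A S :=
  ⟨fun a s t => M.R a s t ∧ P t, M.V⟩

/-- Satisfaction, with believed announcements interpreted by arrow elimination. -/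
def Sat {A S : Type} : Model A S → Form A → S → Prop
  | M, .atom n, s => M.V n s
  | M, .neg φ, s => ¬ Sat M φ s
  | M, .conj φ ψ, s => Sat M φ s ∧ Sat M ψ s
  | M, .box a φ, s => ∀ t : S, M.R a s t → Sat M φ t
  | M, .ann φ ψ, s => Sat (M.restrict (fun t => Sat M φ t)) ψ s

/-- K45: every accessibility relation is transitive and euclidean. -/
def isK45 {A S : Type} (M : Model A S) : Prop :=
  ∀ a : A, (∀ x y z : S, M.R a x y → M.R a y z → M.R a x z) ∧
    (∀ x y z : S, M.R a x y → M.R a x z → M.R a y z)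

/-- KD45: every accessibility relation is transitive, euclidean and serial. -/
def isKD45 {A S : Type} (M : Model A S) : Prop :=
  ∀ a : A, (∀ x y z : S, M.R a x y → M.R a y z → M.R a x z) ∧
    (∀ x y z : S, M.R a x y → M.R a x z → M.R a y z) ∧
    (∀ x : S, ∃ y : S, M.R a x y)

/-- Announcement-free (basic modal) formulas. -/
inductive NoAnn {A : Type} : Form A → Prop
  | atom (n : ℕ) : NoAnn (Form.atom n)
  | neg {φ : Form A} : NoAnn φ → NoAnn (Form.neg φ)
  | conj {φ ψ : Form A} : NoAnn φ → NoAnn ψ → NoAnn (Form.conj φ ψ)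
  | box {a : A} {φ : Form A} : NoAnn φ → NoAnn (Form.box a φ)

/-- Satisfaction in the submodel of M induced by the set D of surviving states
(states, relations and valuation of M restricted to D). The announcement clause
is by state elimination within D (irrelevant here: formulas used are
announcement-free). -/
def SatOn {A S : Type} (M : Model A S) : Set S → Form A → S → Prop
  | _, .atom n, s => M.V n s
  | D, .neg φ, s => ¬ SatOn M D φ s
  | D, .conj φ ψ, s => SatOn M D φ s ∧ SatOn M D ψ s
  | D, .box a φ, s => ∀ t : S, t ∈ D → M.R a s t → SatOn M D φ t
  | D, .ann φ ψ, s => SatOn M {t | t ∈ D ∧ SatOn M D φ t} ψ s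

/-- Iterated truthful (state-elimination) announcement of φ, represented by the
shrinking set of surviving states: M|_{φ^0} has all states, and M|_{φ^{n+1}} is
the restriction of M|_{φ^n} to the states of M|_{φ^n} satisfying φ there. -/
def iterDom {A S : Type} (M : Model A S) (φ : Form A) : ℕ → Set S
  | 0 => Set.univ
  | n + 1 => {t | t ∈ iterDom M φ n ∧ SatOn M (iterDom M φ n) φ t}


/-!
Take a "spider": a hub with one leg of every finite length, the edges along each leg labelled
alternately `a, b, a, …` starting at the hub, and `p₀` true exactly at even distance from the hub.
In an S5 model whose classes are these edges (the hub's `a`-class being the hub and all first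
nodes), `φ = ¬((p₀ ∧ □_a p₀) ∨ (¬p₀ ∧ □_b ¬p₀))` says that the current node has a successor, so
announcing it cuts the last node off every leg and leaves the hub in place. After `n` announcements
the hub sees a leg reduced to its first node exactly when that leg had `n + 1` nodes; marking the
first nodes of the legs with an odd number of nodes after them by `p₁`, the formula
`ψ = ◇_a (p₁ ∧ ¬φ)` holds at the hub iff `n` is odd.
-/

theorem satOn_dia {A S : Type} (M : Model A S) (D : Set S) (a : A) (φ : Form A) (t : S) :
    SatOn M D (Form.dia a φ) t ↔ ∃ t' ∈ D, M.R a t t' ∧ SatOn M D φ t' := by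
  simp [Form.dia, SatOn]

theorem iterDom_eq {A S : Type} (M : Model A S) (φ : Form A) (D : ℕ → Set S)
    (h0 : D 0 = Set.univ) (hsucc : ∀ n t, t ∈ D n ∧ SatOn M (D n) φ t ↔ t ∈ D (n + 1))
    (n : ℕ) : iterDom M φ n = D n := by
  induction n with
  | zero => exact h0.symm
  | succ n ih => ext t; simp only [iterDom, ih]; exact hsucc n t

def Form.atChainEnd : Form Bool :=
  Form.or (.conj (.atom 0) (.box true (.atom 0)))
    (.conj (.neg (.atom 0)) (.box false (.neg (.atom 0))))

theorem satOn_atChainEnd {S : Type} (M : Model Bool S) (D : Set S) (t : S) (a : Bool)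
    (ha : a = true ↔ M.V 0 t) :
    SatOn M D Form.atChainEnd t ↔ ¬∃ t' ∈ D, M.R a t t' ∧ (M.V 0 t' ↔ ¬M.V 0 t) := by
  cases a <;> simp only [Bool.false_eq_true, false_iff, true_iff] at ha <;>
    simp [SatOn, Form.atChainEnd, Form.or, ha]

/-- `leg i d` is the node at distance `i + 1` from the hub on a leg with `d` further nodes. -/
inductive Spider : Type
  | hub
  | leg (i d : ℕ)

namespace Spider

def pos : Spider → ℕ
  | hub => 0
  | leg i _ => i + 1

def pred : Spider → Spider
  | hub => hub
  | leg 0 _ => hub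
  | leg (i + 1) d => leg i (d + 1)

/-- Agent `a`'s class of `t` is labelled by its node nearest to the hub: `t` itself if `a` leads
away from the hub at `t` (agent `true` at even, `false` at odd distance), `t.pred` otherwise. -/
def key (a : Bool) (t : Spider) : Spider :=
  if decide (Even t.pos) = a then t else t.pred

def val : ℕ → Spider → Prop
  | 0, t => Even t.pos
  | 1, t => ∃ d, t = leg 0 d ∧ Odd d
  | _, _ => False

def model : Model Bool Spider := ⟨fun a t t' => key a t = key a t', val⟩

def Survives (n : ℕ) : Spider → Prop
  | hub => True
  | leg _ d => n ≤ d

def seesOddStub : Form Bool := Form.dia true (.conj (.atom 1) Form.atChainEnd)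

theorem pos_pred_add_one {t : Spider} (h : t ≠ hub) : t.pred.pos + 1 = t.pos := by
  rcases t with _ | ⟨_ | i, d⟩ <;> simp_all [pred, pos]

theorem key_eq_and_parity_ne_iff (t t' : Spider) :
    key (decide (Even t.pos)) t = key (decide (Even t.pos)) t' ∧ (Even t'.pos ↔ ¬Even t.pos) ↔
      t'.pred = t ∧ t' ≠ t := by
  have hkey_self : key (decide (Even t.pos)) t = t := by simp [key]
  rw [hkey_self]
  constructor
  · rintro ⟨hkey, hpar⟩
    have hdec : decide (Even t'.pos) ≠ decide (Even t.pos) := by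
      by_cases h : Even t.pos <;> simp [h, hpar]
    refine ⟨(if_neg hdec).symm.trans hkey.symm, ?_⟩
    rintro rfl
    exact iff_not_self hpar
  · rintro ⟨hpred, hne⟩
    have hhub : t' ≠ hub := by rintro rfl; exact hne hpred
    have hpar : Even t'.pos ↔ ¬Even t.pos := by
      rw [← pos_pred_add_one hhub, hpred]; exact Nat.even_add_one
    have hdec : decide (Even t'.pos) ≠ decide (Even t.pos) := by
      by_cases h : Even t.pos <;> simp [h, hpar]
    exact ⟨(hpred.symm.trans (if_neg hdec).symm), hpar⟩

theorem survives_of_survives_succ {n : ℕ} {t : Spider} (h : Survives (n + 1) t) :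
    Survives n t := by
  cases t with
  | hub => trivial
  | leg _ d => exact Nat.le_of_succ_le h

theorem exists_succ_survives_iff {n : ℕ} {t : Spider} (ht : Survives n t) :
    (∃ t', Survives n t' ∧ t'.pred = t ∧ t' ≠ t) ↔ Survives (n + 1) t := by
  cases t with
  | hub => exact ⟨fun _ => trivial, fun _ => ⟨leg 0 n, le_rfl, rfl, by simp⟩⟩
  | leg i d =>
    constructor
    · rintro ⟨t', ht', hpred, -⟩
      rcases t' with _ | ⟨_ | i', d'⟩ <;> simp [pred] at hpred
      obtain ⟨rfl, rfl⟩ := hpred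
      simp only [Survives] at ht' ⊢
      omega
    · intro h
      obtain ⟨d, rfl⟩ : ∃ d', d = d' + 1 := ⟨d - 1, by simp only [Survives] at h; omega⟩
      exact ⟨leg (i + 1) d, by simp only [Survives] at h ⊢; omega, rfl, by simp⟩

theorem satOn_atChainEnd_iff {n : ℕ} {t : Spider} (ht : Survives n t) :
    SatOn model {t | Survives n t} Form.atChainEnd t ↔ ¬Survives (n + 1) t := by
  rw [satOn_atChainEnd model _ t (decide (Even t.pos)) (by simp [model, val]),
    ← exists_succ_survives_iff ht]
  change (¬∃ t', Survives n t' ∧ (key _ t = key _ t' ∧ (Even t'.pos ↔ ¬Even t.pos))) ↔ _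
  simp only [key_eq_and_parity_ne_iff]

theorem iterDom_not_atChainEnd (n : ℕ) :
    iterDom model (.neg Form.atChainEnd) n = {t | Survives n t} := by
  refine iterDom_eq _ _ (fun n => {t | Survives n t}) (by ext t; cases t <;> simp [Survives])
    (fun n t => ⟨?_, fun h => ?_⟩) n
  · rintro ⟨ht, hnot⟩
    exact not_not.mp ((satOn_atChainEnd_iff ht).not.mp hnot)
  · have ht := survives_of_survives_succ h
    exact ⟨ht, (satOn_atChainEnd_iff ht).not.mpr (not_not.mpr h)⟩

theorem satOn_seesOddStub_hub (n : ℕ) :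
    SatOn model {t | Survives n t} seesOddStub hub ↔ Odd n := by
  rw [seesOddStub, satOn_dia]
  constructor
  · rintro ⟨t, ht, -, ⟨d, rfl, hd⟩, hend⟩
    rw [satOn_atChainEnd_iff (t := leg 0 d) ht] at hend
    have hnd : n ≤ d := ht
    simp only [Survives, not_le] at hend
    exact (show d = n by omega) ▸ hd
  · intro hn
    exact ⟨leg 0 n, le_refl n, by simp [model, key, pos, pred], ⟨n, rfl, hn⟩,
      (satOn_atChainEnd_iff (t := leg 0 n) (le_refl n)).mpr (by simp [Survives])⟩

end Spider

/-- Iterated truthful announcement need not stabilize other formulas on S5: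
there are a two-agent S5 model (both relations are equivalence relations) and
announcement-free formulas φ and ψ such that for every n, the designated state s
survives in M|_{φ^n}, φ is true at s in M|_{φ^n} (each announcement of φ is
truthful), and ψ is true at s in M|_{φ^n} iff n is odd. -/
theorem iterated_truthful_announcement_unstable_on_S5 :
    ∃ (S : Type) (M : Model Bool S) (s : S) (φ ψ : Form Bool),
      NoAnn φ ∧ NoAnn ψ ∧
      (∀ a : Bool, Equivalence (M.R a)) ∧
      ∀ n : ℕ,
        s ∈ iterDom M φ n ∧
        SatOn M (iterDom M φ n) φ s ∧
        (SatOn M (iterDom M φ n) ψ s ↔ Odd n) := by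
  refine ⟨Spider, Spider.model, .hub, .neg Form.atChainEnd, Spider.seesOddStub,
    by repeat constructor, by repeat constructor, fun _ => ⟨fun _ => rfl, Eq.symm, Eq.trans⟩,
    fun n => ?_⟩
  rw [Spider.iterDom_not_atChainEnd]
  exact ⟨trivial,
    (Spider.satOn_atChainEnd_iff (n := n) (t := .hub) trivial).not.mpr (not_not_intro trivial),
    Spider.satOn_seesOddStub_hub n⟩
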